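/- Let ν be strictly dominant, N ∈ ℤ, and m > 0 an integer. If g, g' ∈ U_N and (f_ν(g))⁻¹·f_ν(g') ∈ U_{m,N}, then g⁻¹·g' ∈ U_{m,N}. Consequently, the map induced by f_ν on the set of right U_{m,N}-cosets in U_N is a bijection. -/

import Mathlib

/-!
Put `φ(g) = ε^ν σ(g) ε^{-ν}`, so that `f_ν(g) = g⁻¹ φ(g)` is the Lang map of `φ`. For `j ≥ 0` the
sets `U_{j,N}` form a decreasing chain of subgroups of `U_N`, each normalised by `U_N`, and since
`ν` is strictly dominant, `φ` raises the level: `φ(U_{j,N}) ⊆ U_{j+1,N}`.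

Injectivity: for `u = g⁻¹g'`, `w = f_ν(g)` and `v = f_ν(g)⁻¹f_ν(g') ∈ U_{m,N}` we have
`u = w φ(u) v⁻¹ w⁻¹`, so `u ∈ U_{k,N}` forces `u ∈ U_{k+1,N}` as long as `k < m`.
Surjectivity: if `f_ν(g)⁻¹h ∈ U_{k,N}`, then `c = f_ν(g)h⁻¹ ∈ U_{k,N}` and
`f_ν(gc)⁻¹h = φ(c)⁻¹ ∈ U_{k+1,N}`.
-/

noncomputable section

open Matrix

/-- The ε-adic valuation on `L = k̄((ε))`, with `val 0 = ∞`. -/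
def val {K : Type*} [Field K] (x : LaurentSeries K) : WithTop ℤ := x.orderTop

/-- The uniformizer ε of the Laurent series field. -/
def eps (K : Type*) [Field K] : LaurentSeries K := HahnSeries.single 1 1

/-- `σ : L → L` is the Frobenius automorphism: it fixes ε and raises each Laurent-series
coefficient to the `q`-th power.  (This property determines `σ` uniquely.) -/
def IsFrobenius (K : Type*) [Field K] (q : ℕ)
    (σ : LaurentSeries K → LaurentSeries K) : Prop :=
  ∀ (x : LaurentSeries K) (n : ℤ), (σ x).coeff n = (x.coeff n) ^ q

/-- Upper unitriangular matrix: an element of `U_1`. -/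
def Unitri {K : Type*} [Field K] {n : ℕ}
    (g : Matrix (Fin n) (Fin n) (LaurentSeries K)) : Prop :=
  (∀ i, g i i = 1) ∧ (∀ i j : Fin n, j < i → g i j = 0)

/-- `ν = (ν_1, …, ν_n)` is strictly dominant: `ν_1 > ν_2 > … > ν_n`. -/
def StrictDominant {n : ℕ} (ν : Fin n → ℤ) : Prop :=
  ∀ p q : Fin n, p < q → ν q < ν p

/-- The diagonal matrix `ε^ν = diag(ε^{ν_1}, …, ε^{ν_n})`. -/
def epsDiag (K : Type*) [Field K] {n : ℕ} (ν : Fin n → ℤ) :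
    Matrix (Fin n) (Fin n) (LaurentSeries K) :=
  Matrix.diagonal fun i => eps K ^ (ν i)

/-- The map `f_ν : U_1 → U_1`, `f_ν(h) = h⁻¹ · ε^ν · σ(h) · ε^{−ν}`. -/
def fnu {K : Type*} [Field K] {n : ℕ} (σ : LaurentSeries K → LaurentSeries K)
    (ν : Fin n → ℤ) (g : Matrix (Fin n) (Fin n) (LaurentSeries K)) :
    Matrix (Fin n) (Fin n) (LaurentSeries K) :=
  g⁻¹ * epsDiag K ν * g.map σ * epsDiag K (fun i => -ν i)

/-- The subgroup `U(o_L)` of `U_1`: unitriangular matrices with entries in `o_L`. -/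
def UO (K : Type*) [Field K] (n : ℕ) :
    Set (Matrix (Fin n) (Fin n) (LaurentSeries K)) :=
  {g | Unitri g ∧ ∀ p q : Fin n, 0 ≤ val (g p q)}

/-- `U_N = {g ∈ U_1 : val(g_{pq}) ≥ (q−p)·N for all p < q}`
(equivalently `ε^{−μ}·U(o_L)·ε^{μ}` for `μ = (N, 2N, …, nN)`). -/
def UN (K : Type*) [Field K] (n : ℕ) (N : ℤ) :
    Set (Matrix (Fin n) (Fin n) (LaurentSeries K)) :=
  {g | Unitri g ∧ ∀ p q : Fin n, p < q →
    ((((q : ℤ) - (p : ℤ)) * N : ℤ) : WithTop ℤ) ≤ val (g p q)}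

/-- `U_{m,N} = {g ∈ U_1 : val(g_{pq}) ≥ (q−p)·N + m for all p < q}`. -/
def UmN (K : Type*) [Field K] (n : ℕ) (m N : ℤ) :
    Set (Matrix (Fin n) (Fin n) (LaurentSeries K)) :=
  {g | Unitri g ∧ ∀ p q : Fin n, p < q →
    ((((q : ℤ) - (p : ℤ)) * N + m : ℤ) : WithTop ℤ) ≤ val (g p q)}

section LangFiltration

variable {G : Type*} [Group G] {φ : G →* G} {H : ℕ → Subgroup G}

theorem inv_mul_map_mem (hH : Antitone H) (hφ : ∀ j, ∀ x ∈ H j, φ x ∈ H (j + 1)) {g : G}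
    (hg : g ∈ H 0) : g⁻¹ * φ g ∈ H 0 :=
  mul_mem (inv_mem hg) (hH (Nat.zero_le 1) (hφ 0 g hg))

theorem inv_mul_mem_of_lang_inv_mul_mem (hH : Antitone H)
    (hφ : ∀ j, ∀ x ∈ H j, φ x ∈ H (j + 1))
    (hconj : ∀ j, ∀ w ∈ H 0, ∀ x ∈ H j, w * x * w⁻¹ ∈ H j)
    {g g' : G} (hg : g ∈ H 0) (hg' : g' ∈ H 0) {m : ℕ}
    (hm : (g⁻¹ * φ g)⁻¹ * (g'⁻¹ * φ g') ∈ H m) : g⁻¹ * g' ∈ H m := by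
  set w := g⁻¹ * φ g
  have hw : w ∈ H 0 := inv_mul_map_mem hH hφ hg
  have hu : g⁻¹ * g' =
      w * (φ (g⁻¹ * g') * ((g⁻¹ * φ g)⁻¹ * (g'⁻¹ * φ g'))⁻¹) * w⁻¹ := by
    simp only [w, map_mul, map_inv]
    group
  suffices ∀ k ≤ m, g⁻¹ * g' ∈ H k from this m le_rfl
  intro k hk
  induction k with
  | zero => exact mul_mem (inv_mem hg) hg'
  | succ k ih =>
    rw [hu]
    exact hconj _ w hw _ (mul_mem (hφ k _ (ih (by omega))) (inv_mem (hH hk hm)))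

theorem exists_lang_inv_mul_mem (hH : Antitone H)
    (hφ : ∀ j, ∀ x ∈ H j, φ x ∈ H (j + 1))
    (hconj : ∀ j, ∀ w ∈ H 0, ∀ x ∈ H j, w * x * w⁻¹ ∈ H j)
    {h : G} (hh : h ∈ H 0) (m : ℕ) : ∃ g ∈ H 0, (g⁻¹ * φ g)⁻¹ * h ∈ H m := by
  induction m with
  | zero => exact ⟨1, one_mem _, by simpa using hh⟩
  | succ k ih =>
    obtain ⟨g, hg, hk⟩ := ih
    set w := g⁻¹ * φ g
    have hc : w * h⁻¹ ∈ H k := by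
      convert inv_mem (hconj k w (inv_mul_map_mem hH hφ hg) _ hk) using 1
      group
    refine ⟨g * (w * h⁻¹), mul_mem hg (hH (Nat.zero_le k) hc), ?_⟩
    convert inv_mem (hφ k _ hc) using 1
    simp only [w, map_mul, map_inv]
    group

end LangFiltration

namespace HahnSeries

variable {Γ R S : Type*} [AddCommMonoid Γ] [PartialOrder Γ] [IsOrderedCancelAddMonoid Γ]
  [Semiring R] [Semiring S]

def mapRingHom (f : R →+* S) : R⟦Γ⟧ →+* S⟦Γ⟧ where
  toFun x := x.map f
  map_zero' := HahnSeries.map_zero (f : R →+ S).toZeroHom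
  map_one' := HahnSeries.map_one f.toMonoidWithZeroHom
  map_add' _ _ := HahnSeries.map_add (f : R →+ S)
  map_mul' _ _ := HahnSeries.map_mul (f : R →ₙ+* S)

@[simp]
theorem coeff_mapRingHom (f : R →+* S) (x : R⟦Γ⟧) (g : Γ) :
    (mapRingHom f x).coeff g = f (x.coeff g) := rfl

end HahnSeries

namespace HahnSeries

variable {Γ R S : Type*} [AddCommMonoid Γ] [LinearOrder Γ] [IsOrderedCancelAddMonoid Γ]
  [Semiring R] [Semiring S]

theorem orderTop_le_orderTop_mapRingHom (f : R →+* S) (x : R⟦Γ⟧) :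
    x.orderTop ≤ (mapRingHom f x).orderTop :=
  le_orderTop_iff_forall.mpr fun _ hj => by
    rw [coeff_mapRingHom, coeff_eq_zero_of_lt_orderTop hj, map_zero]

end HahnSeries

open HahnSeries

section

variable {K : Type*} [Field K] {n : ℕ}

local notation "𝕄" => Matrix (Fin n) (Fin n) (LaurentSeries K)

theorem val_add_ge_min (x y : LaurentSeries K) : min (val x) (val y) ≤ val (x + y) :=
  min_orderTop_le_orderTop_add

theorem val_neg (x : LaurentSeries K) : val (-x) = val x := orderTop_neg

theorem val_mul (x y : LaurentSeries K) : val (x * y) = val x + val y := orderTop_mul x y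

theorem top_le_val_iff {x : LaurentSeries K} : ⊤ ≤ val x ↔ x = 0 := by
  rw [top_le_iff]; exact orderTop_eq_top

theorem val_sum_ge {ι : Type*} {s : Finset ι} {f : ι → LaurentSeries K} {c : WithTop ℤ}
    (h : ∀ i ∈ s, c ≤ val (f i)) : c ≤ val (∑ i ∈ s, f i) := by
  simpa only [val, ← addVal_apply] using (addVal ℤ K).map_le_sum h

theorem val_eps_zpow (k : ℤ) : val (eps K ^ k) = k := by
  rw [eps, ← RatFunc.single_zpow, val, orderTop_single one_ne_zero]

/-- The bound that `U_{j,N}` imposes on `val ((g - 1) p q)`; the value `⊤` forces the entries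
on and below the diagonal to vanish. -/
def levelBound (N j : ℤ) (p q : Fin n) : WithTop ℤ :=
  if p < q then (((q - p : ℤ) * N + j : ℤ) : WithTop ℤ) else ⊤

theorem levelBound_mono (N : ℤ) {i j : ℤ} (hij : i ≤ j) (p q : Fin n) :
    levelBound N i p q ≤ levelBound N j p q := by
  unfold levelBound
  split_ifs
  · exact WithTop.coe_le_coe.mpr (by omega)
  · exact le_rfl

theorem levelBound_le_add (N i j : ℤ) (p r q : Fin n) :
    levelBound N (i + j) p q ≤ levelBound N i p r + levelBound N j r q := by
  unfold levelBound
  split_ifs with hpq hpr hrq hrq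
  · exact WithTop.coe_le_coe.mpr (by linarith)
  all_goals first | exact absurd (‹p < r›.trans ‹r < q›) ‹¬p < q› | simp

variable (K n) in
def strictLevel (N j : ℤ) : AddSubgroup 𝕄 where
  carrier := {x | ∀ p q, levelBound N j p q ≤ val (x p q)}
  zero_mem' _ _ := by simp [val]
  add_mem' hx hy p q := (le_min (hx p q) (hy p q)).trans (val_add_ge_min _ _)
  neg_mem' hx p q := by rw [neg_apply, val_neg]; exact hx p q

theorem mem_strictLevel {N j : ℤ} {x : 𝕄} :
    x ∈ strictLevel K n N j ↔ ∀ p q, levelBound N j p q ≤ val (x p q) := Iff.rfl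

theorem strictLevel_antitone (N : ℤ) : Antitone (strictLevel K n N) :=
  fun _ _ hij _ hx p q => (levelBound_mono N hij p q).trans (hx p q)

theorem mul_mem_strictLevel {N i j : ℤ} {x y : 𝕄}
    (hx : x ∈ strictLevel K n N i) (hy : y ∈ strictLevel K n N j) :
    x * y ∈ strictLevel K n N (i + j) := by
  intro p q
  rw [mul_apply]
  refine val_sum_ge fun r _ => ?_
  rw [val_mul]
  exact (levelBound_le_add N i j p r q).trans (add_le_add (hx p r) (hy r q))

theorem pow_succ_mem_strictLevel {N j : ℤ} (hj : 0 ≤ j) {x : 𝕄}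
    (hx : x ∈ strictLevel K n N j) (k : ℕ) : x ^ (k + 1) ∈ strictLevel K n N j := by
  induction k with
  | zero => simpa using hx
  | succ k ih =>
    rw [pow_succ]
    exact strictLevel_antitone N (by omega) (mul_mem_strictLevel ih hx)

theorem pow_card_eq_zero_of_mem_strictLevel {N j : ℤ} {x : 𝕄}
    (hx : x ∈ strictLevel K n N j) : x ^ n = 0 := by
  have hzero : ∀ p q, ¬ p < q → x p q = 0 := fun p q h =>
    top_le_val_iff.mp (by simpa [levelBound, h] using hx p q)
  have hchar : x.charpoly = Polynomial.X ^ n := by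
    rw [charpoly_of_isUpperTriangular x fun p q h => hzero p q h.not_gt]
    simp [hzero _ _ (lt_irrefl _)]
  simpa [hchar] using aeval_self_charpoly x

theorem mem_UmN_iff {j N : ℤ} {g : 𝕄} :
    g ∈ UmN K n j N ↔ g - 1 ∈ strictLevel K n N j := by
  simp only [UmN, Unitri, Set.mem_ofPred_eq, mem_strictLevel, levelBound, Matrix.sub_apply]
  constructor
  · rintro ⟨⟨hdiag, hlow⟩, hup⟩ p q
    split_ifs with hpq
    · simpa [one_apply_ne hpq.ne] using hup p q hpq
    · rw [top_le_val_iff]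
      rcases (not_lt.mp hpq).eq_or_lt with rfl | hqp
      · simp [hdiag]
      · simp [hlow _ _ hqp, one_apply_ne hqp.ne']
  · intro h
    have hzero : ∀ p q, ¬ p < q → g p q - (1 : 𝕄) p q = 0 :=
      fun p q hpq => top_le_val_iff.mp (by simpa [hpq] using h p q)
    refine ⟨⟨fun p => ?_, fun p q hqp => ?_⟩, fun p q hpq => ?_⟩
    · simpa [sub_eq_zero] using hzero p p (lt_irrefl p)
    · simpa [one_apply_ne hqp.ne'] using hzero p q hqp.not_gt
    · simpa [hpq, one_apply_ne hpq.ne] using h p q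

theorem UN_eq_UmN_zero (N : ℤ) : UN K n N = UmN K n 0 N := by
  simp only [UN, UmN, add_zero]

theorem one_mem_UmN (j N : ℤ) : (1 : 𝕄) ∈ UmN K n j N :=
  mem_UmN_iff.mpr (by rw [sub_self]; exact zero_mem _)

theorem UmN_antitone (N : ℤ) {i j : ℤ} (hij : i ≤ j) :
    UmN K n j N ⊆ UmN K n i N :=
  fun _ hg => mem_UmN_iff.mpr (strictLevel_antitone N hij (mem_UmN_iff.mp hg))

theorem mul_mem_UmN {j N : ℤ} (hj : 0 ≤ j) {a b : 𝕄}
    (ha : a ∈ UmN K n j N) (hb : b ∈ UmN K n j N) : a * b ∈ UmN K n j N := by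
  rw [mem_UmN_iff] at *
  have hab : a * b - 1 = (a - 1) * (b - 1) + (a - 1) + (b - 1) := by noncomm_ring
  rw [hab]
  refine add_mem (add_mem ?_ ha) hb
  exact strictLevel_antitone N (by omega) (mul_mem_strictLevel ha hb)

theorem exists_mul_eq_one_of_mem_UmN {j N : ℤ} (hj : 0 ≤ j)
    {g : 𝕄} (hg : g ∈ UmN K n j N) :
    ∃ b ∈ UmN K n j N, g * b = 1 := by
  set x := 1 - g
  have hx : x ∈ strictLevel K n N j := by simpa [x] using neg_mem (mem_UmN_iff.mp hg)
  have hxn : x ^ n = 0 := pow_card_eq_zero_of_mem_strictLevel hx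
  refine ⟨∑ i ∈ Finset.range n, x ^ i, mem_UmN_iff.mpr ?_, ?_⟩
  · have hsum := Finset.sum_range_succ' (fun i => x ^ i) n
    rw [Finset.sum_range_succ, hxn, add_zero, pow_zero] at hsum
    rw [hsum, add_sub_cancel_right]
    exact sum_mem fun i _ => pow_succ_mem_strictLevel hj hx i
  · have hg' : g = 1 - x := by simp [x]
    rw [hg', mul_neg_geom_sum, hxn, sub_zero]

theorem mul_mem_strictLevel_of_mem_UmN_zero_left {j N : ℤ}
    {w y : 𝕄} (hw : w ∈ UmN K n 0 N)
    (hy : y ∈ strictLevel K n N j) : w * y ∈ strictLevel K n N j := by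
  have h := mul_mem_strictLevel (mem_UmN_iff.mp hw) hy
  rw [zero_add] at h
  simpa [sub_mul] using add_mem h hy

theorem mul_mem_strictLevel_of_mem_UmN_zero_right {j N : ℤ}
    {w y : 𝕄} (hw : w ∈ UmN K n 0 N)
    (hy : y ∈ strictLevel K n N j) : y * w ∈ strictLevel K n N j := by
  have h := mul_mem_strictLevel hy (mem_UmN_iff.mp hw)
  rw [add_zero] at h
  simpa [mul_sub] using add_mem h hy

theorem conj_mem_UmN {j N : ℤ} {w w' x : 𝕄}
    (hw : w ∈ UmN K n 0 N) (hw' : w' ∈ UmN K n 0 N) (hww' : w * w' = 1)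
    (hx : x ∈ UmN K n j N) : w * x * w' ∈ UmN K n j N := by
  rw [mem_UmN_iff] at hx ⊢
  have h : w * x * w' - 1 = w * (x - 1) * w' := by rw [mul_sub, sub_mul, mul_one, hww']
  rw [h]
  exact mul_mem_strictLevel_of_mem_UmN_zero_right hw'
    (mul_mem_strictLevel_of_mem_UmN_zero_left hw hx)

theorem eps_ne_zero : eps K ≠ 0 := single_ne_zero one_ne_zero

theorem epsDiag_mul_epsDiag_neg (ν : Fin n → ℤ) :
    epsDiag K ν * epsDiag K (fun i => -ν i) = 1 := by
  rw [epsDiag, epsDiag, diagonal_mul_diagonal, ← diagonal_one]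
  simp [zpow_ne_zero _ eps_ne_zero]

theorem epsDiag_neg_mul_epsDiag (ν : Fin n → ℤ) :
    epsDiag K (fun i => -ν i) * epsDiag K ν = 1 := by
  rw [epsDiag, epsDiag, diagonal_mul_diagonal, ← diagonal_one]
  simp [zpow_ne_zero _ eps_ne_zero]

def twist (σ : LaurentSeries K →+* LaurentSeries K) (ν : Fin n → ℤ) :
    𝕄 →+* 𝕄 where
  toFun g := epsDiag K ν * g.map σ * epsDiag K (fun i => -ν i)
  map_one' := by simp [epsDiag_mul_epsDiag_neg]
  map_mul' a b := by
    simp only [Matrix.map_mul, Matrix.mul_assoc]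
    rw [← Matrix.mul_assoc (epsDiag K _) (epsDiag K ν), epsDiag_neg_mul_epsDiag, Matrix.one_mul]
  map_zero' := by simp
  map_add' a b := by simp [Matrix.map_add, Matrix.mul_add, Matrix.add_mul]

variable {σ : LaurentSeries K →+* LaurentSeries K} {ν : Fin n → ℤ}

theorem twist_apply (g : 𝕄) (p q : Fin n) :
    twist σ ν g p q = eps K ^ ν p * σ (g p q) * eps K ^ (-ν q) := by
  simp [twist, epsDiag, diagonal_mul, mul_diagonal]

theorem fnu_eq_inv_mul_twist (g : 𝕄) :
    fnu σ ν g = g⁻¹ * twist σ ν g := by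
  simp only [fnu, twist, RingHom.coe_mk, MonoidHom.coe_mk, OneHom.coe_mk, Matrix.mul_assoc]

theorem twist_mem_strictLevel_succ (hν : StrictDominant ν) (hσ : ∀ a, val a ≤ val (σ a))
    {N j : ℤ} {x : 𝕄} (hx : x ∈ strictLevel K n N j) :
    twist σ ν x ∈ strictLevel K n N (j + 1) := by
  intro p q
  rw [twist_apply]
  by_cases hpq : p < q
  · have hxpq : ((((q : ℤ) - p) * N + j : ℤ) : WithTop ℤ) ≤ val (σ (x p q)) := by
      simpa [levelBound, hpq] using (hx p q).trans (hσ _)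
    rw [val_mul, val_mul, val_eps_zpow, val_eps_zpow]
    simp only [levelBound, hpq, if_true]
    calc ((((q : ℤ) - p) * N + (j + 1) : ℤ) : WithTop ℤ)
        ≤ ((ν p + (((q : ℤ) - p) * N + j) + -ν q : ℤ) : WithTop ℤ) :=
          WithTop.coe_le_coe.mpr (by linarith [hν p q hpq])
      _ ≤ _ := by rw [WithTop.coe_add, WithTop.coe_add]; gcongr
  · have : x p q = 0 := top_le_val_iff.mp (by simpa [levelBound, hpq] using hx p q)
    simp [this, levelBound, hpq, val]

theorem twist_mem_UmN_succ (hν : StrictDominant ν) (hσ : ∀ a, val a ≤ val (σ a))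
    {N j : ℤ} {g : 𝕄} (hg : g ∈ UmN K n j N) :
    twist σ ν g ∈ UmN K n (j + 1) N := by
  rw [mem_UmN_iff] at hg ⊢
  rw [← map_one (twist σ ν), ← map_sub]
  exact twist_mem_strictLevel_succ hν hσ hg

variable (K n) in
def levelSubgroup (N : ℤ) (j : ℕ) : Subgroup 𝕄ˣ where
  carrier := {u | (u : 𝕄) ∈ UmN K n j N}
  one_mem' := one_mem_UmN _ _
  mul_mem' := mul_mem_UmN (Int.natCast_nonneg j)
  inv_mem' {u} hu := by
    obtain ⟨b, hb, hub⟩ := exists_mul_eq_one_of_mem_UmN (Int.natCast_nonneg j) hu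
    rwa [Set.mem_ofPred_eq, Units.inv_eq_of_mul_eq_one_right hub]

theorem mem_levelSubgroup {N : ℤ} {j : ℕ} {u : 𝕄ˣ} :
    u ∈ levelSubgroup K n N j ↔ (u : 𝕄) ∈ UmN K n j N :=
  Iff.rfl

theorem levelSubgroup_antitone (N : ℤ) : Antitone (levelSubgroup K n N) :=
  fun _ _ hij _ hu => UmN_antitone N (Int.ofNat_le.mpr hij) hu

theorem conj_mem_levelSubgroup {N : ℤ} {j : ℕ} {w x : 𝕄ˣ}
    (hw : w ∈ levelSubgroup K n N 0) (hx : x ∈ levelSubgroup K n N j) :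
    w * x * w⁻¹ ∈ levelSubgroup K n N j :=
  conj_mem_UmN hw (inv_mem hw) w.mul_inv hx

theorem map_twist_mem_levelSubgroup_succ (hν : StrictDominant ν)
    (hσ : ∀ a, val a ≤ val (σ a)) {N : ℤ} {j : ℕ}
    {u : 𝕄ˣ} (hu : u ∈ levelSubgroup K n N j) :
    Units.map (twist σ ν) u ∈ levelSubgroup K n N (j + 1) := by
  rw [mem_levelSubgroup, Units.coe_map, Nat.cast_succ]
  exact twist_mem_UmN_succ hν hσ hu

theorem coe_inv_mul_map_twist (u : 𝕄ˣ) :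
    ((u⁻¹ * Units.map (twist σ ν) u : 𝕄ˣ) : 𝕄) = fnu σ ν u := by
  rw [fnu_eq_inv_mul_twist, Units.val_mul, coe_units_inv, Units.coe_map]
  rfl

theorem exists_unit_of_mem_UN {N : ℤ} {g : 𝕄} (hg : g ∈ UN K n N) :
    ∃ u ∈ levelSubgroup K n N 0, ↑u = g := by
  rw [UN_eq_UmN_zero] at hg
  obtain ⟨b, -, hgb⟩ := exists_mul_eq_one_of_mem_UmN le_rfl hg
  exact ⟨⟨g, b, hgb, mul_eq_one_comm.mp hgb⟩, hg, rfl⟩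

end

theorem IsFrobenius.eq_mapRingHom {F K : Type*} [Field F] [Fintype F] [Field K] [Algebra F K]
    {σ : LaurentSeries K → LaurentSeries K} (hσ : IsFrobenius K (Fintype.card F) σ) :
    σ = mapRingHom (Γ := ℤ) (FiniteField.frobeniusAlgHom F K).toRingHom := by
  funext x
  ext i
  rw [hσ x i]
  rfl

theorem fnu_injective_mod_UmN_general (F : Type*) [Field F] [Fintype F]
    (n : ℕ)
    (σ : LaurentSeries (AlgebraicClosure F) → LaurentSeries (AlgebraicClosure F))
    (hσ : IsFrobenius (AlgebraicClosure F) (Fintype.card F) σ)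
    (ν : Fin n → ℤ) (hν : StrictDominant ν) (N m : ℤ) (hm : 0 < m) :
    (∀ g g' : Matrix (Fin n) (Fin n) (LaurentSeries (AlgebraicClosure F)),
      g ∈ UN (AlgebraicClosure F) n N → g' ∈ UN (AlgebraicClosure F) n N →
      (fnu σ ν g)⁻¹ * fnu σ ν g' ∈ UmN (AlgebraicClosure F) n m N →
      g⁻¹ * g' ∈ UmN (AlgebraicClosure F) n m N) ∧
    (∀ h ∈ UN (AlgebraicClosure F) n N, ∃ g ∈ UN (AlgebraicClosure F) n N,
      (fnu σ ν g)⁻¹ * h ∈ UmN (AlgebraicClosure F) n m N) := by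
  set τ := mapRingHom (Γ := ℤ) (FiniteField.frobeniusAlgHom F (AlgebraicClosure F)).toRingHom
  obtain rfl : σ = τ := hσ.eq_mapRingHom
  set H := levelSubgroup (AlgebraicClosure F) n N
  have hφ : ∀ j, ∀ u ∈ H j, Units.map (twist τ ν) u ∈ H (j + 1) :=
    fun _ _ => map_twist_mem_levelSubgroup_succ hν (orderTop_le_orderTop_mapRingHom _)
  have hconj : ∀ j, ∀ w ∈ H 0, ∀ x ∈ H j, w * x * w⁻¹ ∈ H j :=
    fun _ _ hw _ hx => conj_mem_levelSubgroup hw hx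
  lift m to ℕ using hm.le
  refine ⟨fun g g' hg hg' hv => ?_, fun h hh => ?_⟩
  · obtain ⟨u, hu, rfl⟩ := exists_unit_of_mem_UN hg
    obtain ⟨u', hu', rfl⟩ := exists_unit_of_mem_UN hg'
    rw [← coe_inv_mul_map_twist, ← coe_inv_mul_map_twist, ← coe_units_inv,
      ← Units.val_mul] at hv
    have := inv_mul_mem_of_lang_inv_mul_mem (levelSubgroup_antitone N) hφ hconj hu hu' hv
    rwa [mem_levelSubgroup, Units.val_mul, coe_units_inv] at this
  · obtain ⟨u, hu, rfl⟩ := exists_unit_of_mem_UN hh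
    obtain ⟨g, hg, hgu⟩ := exists_lang_inv_mul_mem (levelSubgroup_antitone N) hφ hconj hu m
    refine ⟨g, by rw [UN_eq_UmN_zero]; exact hg, ?_⟩
    rwa [← coe_inv_mul_map_twist, ← coe_units_inv, ← Units.val_mul]

/-- if `ν` is strictly dominant, `g, g' ∈ U_N` and
`(f_ν(g))⁻¹·f_ν(g') ∈ U_{m,N}`, then `g⁻¹·g' ∈ U_{m,N}`.  Consequently (together with
surjectivity of `f_ν` on cosets, stated as the second conjunct), the map induced by `f_ν`
on the set of right `U_{m,N}`-cosets in `U_N` is a bijection. -/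
theorem fnu_injective_mod_UmN (F : Type*) [Field F] [Fintype F]
    (n : ℕ) (hn : 2 ≤ n)
    (σ : LaurentSeries (AlgebraicClosure F) → LaurentSeries (AlgebraicClosure F))
    (hσ : IsFrobenius (AlgebraicClosure F) (Fintype.card F) σ)
    (ν : Fin n → ℤ) (hν : StrictDominant ν) (N m : ℤ) (hm : 0 < m) :
    (∀ g g' : Matrix (Fin n) (Fin n) (LaurentSeries (AlgebraicClosure F)),
      g ∈ UN (AlgebraicClosure F) n N → g' ∈ UN (AlgebraicClosure F) n N →
      (fnu σ ν g)⁻¹ * fnu σ ν g' ∈ UmN (AlgebraicClosure F) n m N →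
      g⁻¹ * g' ∈ UmN (AlgebraicClosure F) n m N) ∧
    (∀ h ∈ UN (AlgebraicClosure F) n N, ∃ g ∈ UN (AlgebraicClosure F) n N,
      (fnu σ ν g)⁻¹ * h ∈ UmN (AlgebraicClosure F) n m N) :=
  fnu_injective_mod_UmN_general F n σ hσ ν hν N m hm
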